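/- arXiv:math/0311077 — 8 statements merged into one kernel-verified Lean document; each statement's English description precedes it below -/
import Mathlib

section
/- Let Z be a commutative Noetherian domain of Krull dimension one that is an algebra over an algebraically closed field k, with dim_k Z < card k (as cardinals). Then Z has transcendence degree at most one over k. -/
universe u v
open Polynomial

lemma dim1_isMaximal {Z : Type v} [CommRing Z] [IsDomain Z]
    (hdim : ringKrullDim Z = 1) {P : Ideal Z} (hP : P.IsPrime) (hne : P ≠ ⊥) :
    P.IsMaximal := by
  by_contra h
  obtain ⟨Q, hQmax, hle⟩ := Ideal.exists_le_maximal P hP.ne_top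
  have hPQ : P < Q := lt_of_le_of_ne hle (fun e => h (e ▸ hQmax))
  have hbP : (⊥ : Ideal Z) < P := bot_lt_iff_ne_bot.mpr hne
  let c : LTSeries (PrimeSpectrum Z) :=
    ⟨2, ![⟨⊥, Ideal.bot_prime⟩, ⟨P, hP⟩, ⟨Q, hQmax.isPrime⟩], by
      intro i
      fin_cases i
      · exact hbP
      · exact hPQ⟩
  have hlen := Order.LTSeries.length_le_krullDim c
  rw [show Order.krullDim (PrimeSpectrum Z) = ringKrullDim Z from rfl, hdim] at hlen
  norm_num [c] at hlen

lemma linearIndependent_inverses {k : Type u} {A : Type v} [Field k] [CommRing A]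
    [Algebra k A] {a : A} (H : ∀ p : k[X], aeval a p = 0 → p = 0)
    {G : Set k} (u : G → A)
    (hu : ∀ i : G, (a - algebraMap k A i) * u i = 1) :
    LinearIndependent k u := by
  classical
  refine linearIndependent_iff'.2 fun s m hm i hi ↦ ?_
  let b := s.prod fun j ↦ a - algebraMap k A j
  have h1 : ∀ i ∈ s, m i • (b * u i) =
      m i • (s.erase i).prod fun j ↦ a - algebraMap k A (j : k) := fun i hi ↦ by
    rw [show b = ((s.erase i).prod fun j ↦ a - algebraMap k A (j : k)) *
        (a - algebraMap k A i) from (Finset.prod_erase_mul s _ hi).symm,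
      mul_assoc, hu i, mul_one]
  replace hm := congr(b * $(hm))
  simp_rw [mul_zero, Finset.mul_sum, mul_smul_comm, Finset.sum_congr rfl h1] at hm
  let p : Polynomial k := s.sum fun i ↦ .C (m i) * (s.erase i).prod fun j ↦ .X - .C (j : k)
  replace hm := congr(Polynomial.aeval (i : k) $(H p (by simp_rw [← hm, p, map_sum, map_mul,
    map_prod, map_sub, aeval_X, aeval_C, Algebra.smul_def])))
  have h2 : ∀ j ∈ s.erase i, m j * ((s.erase j).prod fun x ↦ (i : k) - (x : k)) = 0 := fun j hj ↦ by
    have := Finset.mem_erase_of_ne_of_mem (Finset.ne_of_mem_erase hj).symm hi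
    simp_rw [← (s.erase j).prod_erase_mul _ this, sub_self, mul_zero]
  simp_rw [map_zero, p, map_sum, map_mul, map_prod, map_sub, aeval_X,
    aeval_C, Algebra.algebraMap_self_apply, ← s.sum_erase_add _ hi,
    Finset.sum_eq_zero h2, zero_add] at hm
  exact eq_zero_of_ne_zero_of_mul_right_eq_zero (Finset.prod_ne_zero_iff.2 fun j hj ↦
    sub_ne_zero.2 fun e => (Finset.ne_of_mem_erase hj) (Subtype.ext e.symm)) hm

/-- Key step: modulo `x - c` the element `y` satisfies a nonzero polynomial over `k`. -/
lemma exists_poly_rel (k : Type u) (Z : Type v) [Field k] [IsAlgClosed k]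
    [CommRing Z] [IsDomain Z] [IsNoetherianRing Z] [Algebra k Z]
    (hdim : ringKrullDim Z = 1)
    (hcard : Cardinal.lift.{u} (Module.rank k Z) < Cardinal.lift.{v} (Cardinal.mk k))
    {x : Z} (hx : ∀ p : k[X], aeval x p = 0 → p = 0) (y : Z) (c : k) :
    ∃ p : k[X], p ≠ 0 ∧ ∃ w : Z, aeval y p = (x - algebraMap k Z c) * w := by
  classical
  set ξ : Z := x - algebraMap k Z c with hξdef
  have hξ : ξ ≠ 0 := by
    intro h
    have : aeval x (X - C c) = 0 := by
      simp [map_sub, aeval_X, aeval_C, ← hξdef, h]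
    exact X_sub_C_ne_zero c (hx _ this)
  set I : Ideal Z := Ideal.span {ξ} with hIdef
  set A := Z ⧸ I
  set φ : Z →ₐ[k] A := Ideal.Quotient.mkₐ k I with hφdef
  -- it suffices to kill `φ y` by a nonzero polynomial
  suffices h : ∃ p : k[X], p ≠ 0 ∧ aeval (φ y) p = 0 by
    obtain ⟨p, hp0, hp⟩ := h
    refine ⟨p, hp0, ?_⟩
    have : aeval y p ∈ I := by
      rw [← Ideal.Quotient.eq_zero_iff_mem]
      have : φ (aeval y p) = aeval (φ y) p := (Polynomial.aeval_algHom_apply φ y p).symm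
      exact this.trans hp
    obtain ⟨w, hw⟩ := Ideal.mem_span_singleton'.mp this
    exact ⟨w, by rw [← hw]; ring⟩
  by_contra hb
  push_neg at hb
  have H : ∀ p : k[X], aeval (φ y) p = 0 → p = 0 := by
    intro p hp
    by_contra hp0
    exact hb p hp0 hp
  -- bad scalars: `φ y - d` not a unit
  set Bad : Set k := {d : k | ¬ IsUnit (φ y - algebraMap k A d)} with hBaddef
  -- each bad scalar gives a minimal prime over `I`
  have key : ∀ d ∈ Bad, ∃ P : Ideal Z, P ∈ I.minimalPrimes ∧
      y - algebraMap k Z d ∈ P ∧ P ≠ ⊤ := by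
    intro d hd
    have hne : Ideal.span {φ y - algebraMap k A d} ≠ ⊤ := by
      rwa [Ne, Ideal.span_singleton_eq_top]
    obtain ⟨M, hM, hle⟩ := Ideal.exists_le_maximal _ hne
    have hmem : φ y - algebraMap k A d ∈ M := hle (Ideal.subset_span rfl)
    set P : Ideal Z := Ideal.comap (Ideal.Quotient.mk I) M with hPdef
    have hPmax : P.IsMaximal :=
      Ideal.comap_isMaximal_of_surjective _ Ideal.Quotient.mk_surjective
    have hIP : I ≤ P := fun z hz => by
      simp [hPdef, Ideal.mem_comap, Ideal.Quotient.eq_zero_iff_mem.2 hz]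
    refine ⟨P, ⟨⟨hPmax.isPrime, hIP⟩, ?_⟩, ?_, hPmax.ne_top⟩
    · rintro q ⟨hq, hIq⟩ hqP
      have hq0 : q ≠ ⊥ := by
        intro h
        exact hξ (by simpa [h] using hIq (Ideal.subset_span rfl : ξ ∈ I))
      have := dim1_isMaximal hdim hq hq0
      exact (this.eq_of_le hPmax.ne_top hqP).ge
    · show y - algebraMap k Z d ∈ Ideal.comap (Ideal.Quotient.mk I) M
      rw [Ideal.mem_comap]
      have : (Ideal.Quotient.mk I) (y - algebraMap k Z d) = φ y - algebraMap k A d := by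
        simp [hφdef, Ideal.Quotient.mkₐ_eq_mk, map_sub]
        rfl
      rwa [this]
  -- hence `Bad` is finite
  have hminfin : I.minimalPrimes.Finite := by
    rw [Ideal.minimalPrimes_eq_comap]
    exact (minimalPrimes.finite_of_isNoetherianRing A).image _
  set F : k → Ideal Z := fun d => if h : d ∈ Bad then (key d h).choose else ⊤ with hFdef
  have hBadFin : Bad.Finite := by
    refine Set.Finite.of_finite_image (f := F) (hminfin.subset ?_) ?_
    · rintro _ ⟨d, hd, rfl⟩
      simp only [hFdef, dif_pos hd]
      exact (key d hd).choose_spec.1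
    · intro d hd d' hd' he
      by_contra hne
      simp only [hFdef, dif_pos hd, dif_pos hd'] at he
      obtain ⟨_, hyd, hPne⟩ := (key d hd).choose_spec
      obtain ⟨_, hyd', _⟩ := (key d' hd').choose_spec
      rw [he] at hyd
      have hsub : algebraMap k Z (d' - d) ∈ (key d' hd').choose := by
        have h := sub_mem hyd hyd'
        rw [map_sub]
        convert h using 1
        ring
      have hunit : IsUnit (algebraMap k Z (d' - d)) :=
        (isUnit_iff_ne_zero.2 (sub_ne_zero.2 (Ne.symm hne))).map (algebraMap k Z)
      rw [← he] at hsub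
      exact hPne (Ideal.eq_top_of_isUnit_mem _ (he ▸ hsub) hunit)
  -- good scalars give linearly independent inverses
  set Good : Set k := Badᶜ with hGooddef
  have hGood : ∀ d : Good, IsUnit (φ y - algebraMap k A d) := fun d => not_not.mp d.2
  set u : Good → A := fun d => ↑(hGood d).unit⁻¹ with hudef
  have hu : ∀ d : Good, (φ y - algebraMap k A d) * u d = 1 := fun d => by
    rw [hudef, ← (hGood d).unit_spec]
    exact Units.mul_inv _
  have hLI : LinearIndependent k u := linearIndependent_inverses H u hu
  have h2 := hLI.cardinal_lift_le_rank
  have h3 : Module.rank k A ≤ Module.rank k Z :=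
    LinearMap.rank_le_of_surjective φ.toLinearMap (Ideal.Quotient.mkₐ_surjective k I)
  have h4 : Cardinal.lift.{v} (Cardinal.mk Good) < Cardinal.lift.{v} (Cardinal.mk k) :=
    lt_of_le_of_lt (h2.trans (Cardinal.lift_le.2 h3)) hcard
  have h5 : Cardinal.mk Good < Cardinal.mk k := Cardinal.lift_lt.mp h4
  have h6 : Cardinal.mk Bad < Cardinal.mk k :=
    lt_of_lt_of_le hBadFin.lt_aleph0 (Cardinal.infinite_iff.mp inferInstance)
  have h7 : Cardinal.mk k ≤ Cardinal.mk Bad + Cardinal.mk Good := by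
    rw [Cardinal.mk_sum_compl]
  exact absurd (Cardinal.add_lt_of_lt (Cardinal.infinite_iff.mp inferInstance) h6 h5)
    (not_lt.2 h7)

lemma final_linind {k : Type u} {Z : Type v} [Field k] [CommRing Z] [IsDomain Z] [Algebra k Z]
    {x y : Z} (hInj : Function.Injective (MvPolynomial.aeval (R := k) ![x, y]))
    {p : k → k[X]} (hp : ∀ c, p c ≠ 0) {w : k → Z}
    (hw : ∀ c, aeval y (p c) = (x - algebraMap k Z c) * w c) :
    LinearIndependent k w := by
  classical
  refine linearIndependent_iff'.2 fun s g hrel i hi ↦ ?_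
  set ξ : k → Z := fun c => x - algebraMap k Z c with hξ
  set b := s.prod ξ with hb
  have h1 : ∀ j ∈ s, g j • (b * w j) =
      g j • (aeval y (p j) * (s.erase j).prod ξ) := fun j hj ↦ by
    rw [show b = ((s.erase j).prod ξ) * ξ j from (Finset.prod_erase_mul s _ hj).symm,
      mul_assoc]
    rw [show ξ j * w j = aeval y (p j) from (hw j).symm]
    ring_nf
  replace hrel := congr(b * $(hrel))
  simp_rw [mul_zero, Finset.mul_sum, mul_smul_comm, Finset.sum_congr rfl h1] at hrel
  set Q : MvPolynomial (Fin 2) k := s.sum fun j => MvPolynomial.C (g j) *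
      (Polynomial.aeval (MvPolynomial.X 1 : MvPolynomial (Fin 2) k) (p j)) *
      ((s.erase j).prod fun l => MvPolynomial.X 0 - MvPolynomial.C l) with hQ
  have hev : (MvPolynomial.aeval ![x, y]) Q = 0 := by
    rw [hQ, ← hrel, map_sum]
    refine Finset.sum_congr rfl fun j hj => ?_
    have e1 : (MvPolynomial.aeval ![x, y]) (Polynomial.aeval (MvPolynomial.X 1 : MvPolynomial (Fin 2) k) (p j)) =
        aeval y (p j) := by
      rw [← Polynomial.aeval_algHom_apply]
      simp
    simp only [map_mul, map_prod, map_sub, MvPolynomial.aeval_C, MvPolynomial.aeval_X,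
      Matrix.cons_val_zero, e1, Algebra.smul_def, ξ]
    ring
  have hQ0 : Q = 0 := hInj (by rw [hev, map_zero])
  have hE := congr((MvPolynomial.aeval (R := k) ![Polynomial.C i, Polynomial.X]) $(hQ0))
  rw [hQ, map_zero, map_sum] at hE
  have h2 : ∀ j ∈ s.erase i,
      (MvPolynomial.aeval (R := k) ![Polynomial.C i, Polynomial.X])
        (MvPolynomial.C (g j) * (Polynomial.aeval (MvPolynomial.X 1 : MvPolynomial (Fin 2) k) (p j)) *
          ((s.erase j).prod fun l => MvPolynomial.X 0 - MvPolynomial.C l)) = 0 := by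
    intro j hj
    have him : i ∈ s.erase j :=
      Finset.mem_erase_of_ne_of_mem (Finset.ne_of_mem_erase hj).symm hi
    rw [map_mul, map_prod]
    rw [Finset.prod_eq_zero him (by simp), mul_zero]
  rw [← Finset.sum_erase_add _ _ hi, Finset.sum_eq_zero h2, zero_add] at hE
  rw [map_mul, map_mul, MvPolynomial.aeval_C, map_prod] at hE
  have e1 : (MvPolynomial.aeval (R := k) ![Polynomial.C i, Polynomial.X])
      (Polynomial.aeval (MvPolynomial.X 1 : MvPolynomial (Fin 2) k) (p i)) = p i := by
    rw [← Polynomial.aeval_algHom_apply]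
    simp
  rw [e1] at hE
  simp only [map_sub, MvPolynomial.aeval_X, MvPolynomial.aeval_C, Matrix.cons_val_zero,
    ← Polynomial.C_eq_algebraMap] at hE
  have hne : (p i * (s.erase i).prod fun l => (Polynomial.C i - Polynomial.C l)) ≠ 0 := by
    refine mul_ne_zero (hp i) (Finset.prod_ne_zero_iff.2 fun l hl => ?_)
    rw [sub_ne_zero, Ne, Polynomial.C_inj]
    exact (Finset.ne_of_mem_erase hl).symm
  rw [mul_assoc] at hE
  rcases mul_eq_zero.mp hE with h | h
  · rwa [Polynomial.C_eq_zero] at h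
  · exact absurd h hne

/-- A commutative Noetherian domain of Krull dimension one over an algebraically
closed field `k` with `dim_k Z < card k` has transcendence degree at most one
over `k`: no two elements are algebraically independent. -/
theorem stmt1 (k : Type u) (Z : Type v) [Field k] [IsAlgClosed k]
    [CommRing Z] [IsDomain Z] [IsNoetherianRing Z] [Algebra k Z]
    (hdim : ringKrullDim Z = 1)
    (hcard : Cardinal.lift.{u} (Module.rank k Z) < Cardinal.lift.{v} (Cardinal.mk k)) :
    ∀ x y : Z, ¬ AlgebraicIndependent k ![x, y] := by
  intro x y hxy
  have hInj : Function.Injective (MvPolynomial.aeval (R := k) ![x, y]) :=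
    algebraicIndependent_iff_injective_aeval.mp hxy
  have hx : ∀ p : k[X], aeval x p = 0 → p = 0 := by
    have ht : Transcendental k x := by
      have := hxy.transcendental 0
      simpa using this
    exact transcendental_iff.mp ht
  choose p hp w hw using fun c => exists_poly_rel k Z hdim hcard hx y c
  have hLI : LinearIndependent k w := final_linind hInj hp hw
  exact absurd (lt_of_le_of_lt hLI.cardinal_lift_le_rank hcard) (lt_irrefl _)
end

section
/- Let k be a field, D a division algebra over k such that dim_k D < card k (as cardinals). Then D is algebraic over k, i.e., every element of D satisfies a nonzero polynomial with coefficients in k. -/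
/-!
If `x ∈ D` were transcendental over `k`, the elements `(x - a)⁻¹`, `a ∈ k`, would be linearly
independent over `k`, forcing `dim_k D ≥ card k`. Linear independence is known for field
extensions; it transfers to `D` because `x` lies in a subfield of `D`, namely its double
centralizer, which is commutative and closed under inverses.
-/

universe u v

namespace Subalgebra

variable {k D : Type*} [Field k] [DivisionRing D] [Algebra k D]

theorem isField_centralizer_centralizer {s : Set D} (hcomm : ∀ a ∈ s, ∀ b ∈ s, a * b = b * a) :
    IsField (centralizer k (centralizer k s : Set D)) where
  exists_pair_ne := ⟨0, 1, zero_ne_one⟩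
  mul_comm a b := Subtype.ext <| Set.centralizer_centralizer_comm_of_comm hcomm _ a.2 _ b.2
  mul_inv_cancel {a} ha :=
    ⟨⟨a⁻¹, Set.inv_mem_centralizer₀ a.2⟩, Subtype.ext <| mul_inv_cancel₀ fun h ↦ ha (Subtype.ext h)⟩

end Subalgebra

open Subalgebra in
theorem Transcendental.linearIndependent_sub_inv_of_divisionRing
    {k D : Type*} [Field k] [DivisionRing D] [Algebra k D] {x : D} (hx : Transcendental k x) :
    LinearIndependent k fun a ↦ (x - algebraMap k D a)⁻¹ := by
  set S := centralizer k (centralizer k {x} : Set D)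
  let : Field S := (isField_centralizer_centralizer (by simp)).toField
  let xS : S := ⟨x, Set.subset_centralizer_centralizer rfl⟩
  have hxS : Transcendental k xS := transcendental_iff_transcendental_val.mpr hx
  have hli := hxS.linearIndependent_sub_inv.map' S.val.toLinearMap
    (LinearMap.ker_eq_bot.mpr Subtype.val_injective)
  have hval : S.val ∘ (fun a ↦ (xS - algebraMap k S a)⁻¹) = fun a ↦ (x - algebraMap k D a)⁻¹ :=
    funext fun a ↦ by rw [Function.comp_apply, map_inv₀, map_sub, AlgHom.commutes]; rfl
  rwa [AlgHom.coe_toLinearMap, hval] at hli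

theorem Transcendental.lift_mk_le_lift_rank
    {k : Type u} {D : Type v} [Field k] [DivisionRing D] [Algebra k D] {x : D}
    (hx : Transcendental k x) :
    Cardinal.lift.{v} (Cardinal.mk k) ≤ Cardinal.lift.{u} (Module.rank k D) :=
  hx.linearIndependent_sub_inv_of_divisionRing.cardinal_lift_le_rank

/-- A division algebra `D` over a field `k` with `dim_k D < card k` is
algebraic over `k`. -/
theorem stmt2 (k : Type u) (D : Type v) [Field k] [DivisionRing D] [Algebra k D]
    (hcard : Cardinal.lift.{u} (Module.rank k D) < Cardinal.lift.{v} (Cardinal.mk k)) :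
    ∀ d : D, IsAlgebraic k d := fun _ ↦
  not_not.mp fun hd ↦ hcard.not_ge (Transcendental.lift_mk_le_lift_rank hd)
end

section
/- Let k be a separably closed field and D a division algebra over k (k contained in the center of D) that is algebraic over k. Then D is commutative. -/
/-!
The centre `Z` of `D` is algebraic over `k`, hence separably closed, and `D` is algebraic over `Z`.
If `D` were not commutative, the Jacobson–Noether theorem would give `x ∉ Z` separable over `Z`;
but an irreducible separable polynomial over a separably closed field has degree one, so `x ∈ Z`.
-/

theorem IsSepClosed.mem_range_algebraMap_of_isSeparable {K A : Type*} [Field K] [IsSepClosed K]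
    [Ring A] [IsDomain A] [Algebra K A] {x : A} (hx : IsSeparable K x) :
    x ∈ Set.range (algebraMap K A) :=
  minpoly.mem_range_of_degree_eq_one K x <|
    IsSepClosed.degree_eq_one_of_irreducible K (minpoly.irreducible hx.isIntegral) hx

theorem DivisionRing.mul_comm_of_isSepClosed_center {D : Type*} [DivisionRing D]
    [IsSepClosed (Subring.center D)] [Algebra.IsAlgebraic (Subring.center D) D] (x y : D) :
    x * y = y * x := by
  suffices hZ : Subring.center D = ⊤ from
    Subring.mem_center_iff.mp (hZ ▸ Subring.mem_top y) x
  by_contra hZ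
  obtain ⟨a, ha, hsep⟩ := JacobsonNoether.exists_separable_and_not_isCentral D hZ
  obtain ⟨z, rfl⟩ := IsSepClosed.mem_range_algebraMap_of_isSeparable hsep
  exact ha z.2

namespace Subring

variable (k D : Type*) [Field k] [DivisionRing D] [Algebra k D]

abbrev centerAlgebra : Algebra k (center D) :=
  ((algebraMap k D).codRestrict _ Set.algebraMap_mem_center).toAlgebra

attribute [local instance] centerAlgebra

instance isScalarTower_centerAlgebra : IsScalarTower k (center D) D :=
  .of_algebraMap_eq fun _ ↦ rfl

theorem isSepClosed_center [IsSepClosed k] [Algebra.IsAlgebraic k D] :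
    IsSepClosed (center D) :=
  have : Algebra.IsAlgebraic k (center D) :=
    .tower_bot_of_injective (A := D) Subtype.val_injective
  Algebra.IsAlgebraic.isSepClosed (F := k)

theorem isAlgebraic_center_of_isAlgebraic [Algebra.IsAlgebraic k D] :
    Algebra.IsAlgebraic (center D) D :=
  .extendScalars (R := k) (algebraMap k (center D)).injective

end Subring

/-- A division algebra over a separably closed field `k` (with `k` in the
centre) that is algebraic over `k` is commutative. -/
theorem stmt3 (k D : Type*) [Field k] [IsSepClosed k] [DivisionRing D] [Algebra k D]
    (halg : ∀ d : D, IsAlgebraic k d) :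
    ∀ x y : D, x * y = y * x :=
  have : Algebra.IsAlgebraic k D := ⟨halg⟩
  have := Subring.isSepClosed_center k D
  have := Subring.isAlgebraic_center_of_isAlgebraic k D
  DivisionRing.mul_comm_of_isSepClosed_center
end

section
/- Let k be a field and D a field extension of k contained in the algebraic closure of k. If D ⊗_k D is a Noetherian ring, then D is finite dimensional over k. -/
/-!
The kernel `I` of multiplication `D ⊗[k] D → D` is generated by finitely many tensors; their
right-hand factors generate a finite extension `E` of `k`, because `D` is algebraic over `k`.
A tensor of `I` whose right-hand factors lie in `E` vanishes in `D ⊗[E] D`, since there it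
equals `(∑ aᵢ bᵢ) ⊗ 1 = 0`. Hence all of `I` does, in particular `1 ⊗ d - d ⊗ 1` for every
`d ∈ D`, and over a field `1 ⊗ d = d ⊗ 1` forces `d ∈ E`. So `D = E`.
-/

open TensorProduct

theorem mem_range_algebraMap_of_tmul_one_eq_one_tmul {K A : Type*} [Field K] [Ring A]
    [Nontrivial A] [Algebra K A] {a : A} (h : a ⊗ₜ[K] (1 : A) = 1 ⊗ₜ a) :
    a ∈ (algebraMap K A).range := by
  obtain ⟨g, hg⟩ := (Algebra.linearMap K A).exists_leftInverse_of_injective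
    (LinearMap.ker_eq_bot.mpr (algebraMap K A).injective)
  have hg1 : g 1 = 1 := by simpa using LinearMap.congr_fun hg 1
  have := congr_arg (TensorProduct.lift (LinearMap.lsmul K A ∘ₗ g)) h
  simp only [lift.tmul, LinearMap.comp_apply, LinearMap.lsmul_apply, hg1, one_smul] at this
  exact ⟨g a, by rw [Algebra.algebraMap_eq_smul_one, this]⟩

theorem mapOfCompatibleSMul_eq_zero_of_mem_kaehlerDifferential_ideal {R A : Type*}
    [CommRing R] [CommRing A] [Algebra R A]
    (B : Subalgebra R A) {N : Submodule R A} (hN : N ≤ Subalgebra.toSubmodule B)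
    {x : A ⊗[R] A} (hxN : x ∈ LinearMap.range (N.subtype.lTensor A))
    (hx : x ∈ KaehlerDifferential.ideal R A) :
    Algebra.TensorProduct.mapOfCompatibleSMul B R R A A x = 0 := by
  obtain ⟨y, rfl⟩ := hxN
  suffices Algebra.TensorProduct.mapOfCompatibleSMul B R R A A (N.subtype.lTensor A y) =
      Algebra.TensorProduct.lmul' R (N.subtype.lTensor A y) ⊗ₜ[B] 1 by
    rw [this, hx, zero_tmul]
  clear hx
  induction y using TensorProduct.induction_on with
  | zero => simp
  | tmul a n =>
    have hn : a * n = (⟨n, hN n.2⟩ : B) • a := by rw [Algebra.smul_def, mul_comm]; rfl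
    simp only [LinearMap.lTensor_tmul, Submodule.subtype_apply,
      Algebra.TensorProduct.mapOfCompatibleSMul_tmul, Algebra.TensorProduct.lmul'_apply_tmul]
    rw [hn, smul_tmul, Algebra.smul_def, mul_one]
    rfl
  | add y z hy hz => simp only [map_add, hy, hz, add_tmul]

theorem IntermediateField.eq_top_of_kaehlerDifferential_ideal_le_ker {K L : Type*}
    [Field K] [Field L] [Algebra K L] (E : IntermediateField K L)
    (h : KaehlerDifferential.ideal K L ≤
      RingHom.ker (Algebra.TensorProduct.mapOfCompatibleSMul E K K L L)) :
    E = ⊤ := by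
  refine eq_top_iff.mpr fun a _ ↦ ?_
  have ha := h (KaehlerDifferential.one_smul_sub_smul_one_mem_ideal (R := K) a)
  rw [RingHom.mem_ker, map_sub, sub_eq_zero, Algebra.TensorProduct.mapOfCompatibleSMul_tmul,
    Algebra.TensorProduct.mapOfCompatibleSMul_tmul] at ha
  obtain ⟨e, rfl⟩ := mem_range_algebraMap_of_tmul_one_eq_one_tmul ha.symm
  exact e.2

theorem exists_finiteDimensional_kaehlerDifferential_ideal_le_ker {K L : Type*}
    [Field K] [Field L] [Algebra K L] [Algebra.IsAlgebraic K L]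
    (h : (KaehlerDifferential.ideal K L).FG) :
    ∃ E : IntermediateField K L, FiniteDimensional K E ∧ KaehlerDifferential.ideal K L ≤
      RingHom.ker (Algebra.TensorProduct.mapOfCompatibleSMul E K K L L) := by
  obtain ⟨S, hS⟩ := h
  obtain ⟨N, hNfin, hSN⟩ := exists_finite_submodule_right_of_setFinite (S : Set (L ⊗[K] L))
    S.finite_toSet
  obtain ⟨T, rfl⟩ := Module.Finite.iff_fg.mp hNfin
  refine ⟨IntermediateField.adjoin K T,
    IntermediateField.finiteDimensional_adjoin fun x _ ↦ Algebra.IsIntegral.isIntegral x, ?_⟩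
  rw [← hS, Ideal.span_le]
  intro s hs
  refine mapOfCompatibleSMul_eq_zero_of_mem_kaehlerDifferential_ideal _ ?_ (hSN hs)
    (hS ▸ Ideal.subset_span hs)
  exact Submodule.span_le.mpr (IntermediateField.subset_adjoin K _)

theorem finiteDimensional_of_fg_kaehlerDifferential_ideal {K L : Type*} [Field K] [Field L]
    [Algebra K L] [Algebra.IsAlgebraic K L] (h : (KaehlerDifferential.ideal K L).FG) :
    FiniteDimensional K L := by
  obtain ⟨E, hE, hker⟩ := exists_finiteDimensional_kaehlerDifferential_ideal_le_ker h
  obtain rfl := E.eq_top_of_kaehlerDifferential_ideal_le_ker hker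
  exact IntermediateField.topEquiv.toLinearEquiv.finiteDimensional

/-- If `D` is a subfield of the algebraic closure of `k` such that `D ⊗_k D` is
Noetherian, then `D` is finite dimensional over `k`. -/
theorem stmt4 (k : Type*) [Field k] (D : IntermediateField k (AlgebraicClosure k))
    (hNoeth : IsNoetherianRing (TensorProduct k D D)) :
    FiniteDimensional k D :=
  finiteDimensional_of_fg_kaehlerDifferential_ideal (isNoetherian_def.mp hNoeth _)
end

section
/- Let R be a semihereditary algebra over a field k and F ⊇ k a finite separable field extension. Then R ⊗_k F is semihereditary. -/
/-- A ring is right semihereditary if every finitely generated right ideal is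
projective as a right module. -/
def IsRightSemihereditary (R : Type*) [Ring R] : Prop :=
  ∀ I : Submodule Rᵐᵒᵖ R, I.FG → Module.Projective Rᵐᵒᵖ I

/-- A ring is left semihereditary if every finitely generated left ideal is
projective as a left module. -/
def IsLeftSemihereditary (R : Type*) [Ring R] : Prop :=
  ∀ I : Ideal R, I.FG → Module.Projective R I

/-- A ring is semihereditary if it is both left and right semihereditary. -/
def IsSemihereditary (R : Type*) [Ring R] : Prop :=
  IsLeftSemihereditary R ∧ IsRightSemihereditary R

open TensorProduct

/-! ### Finitely generated submodules of free modules over semihereditary rings -/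

theorem aux_proj_of_embed {R : Type*} [Ring R] (hR : IsLeftSemihereditary R) :
    ∀ (n : ℕ) (M : Type*) [AddCommGroup M] [Module R M] [Module.Finite R M]
      (f : M →ₗ[R] (Fin n → R)), Function.Injective f → Module.Projective R M := by
  intro n
  induction n with
  | zero =>
    intro M _ _ _ f hf
    have : Subsingleton M := ⟨fun a b => hf (Subsingleton.elim _ _)⟩
    infer_instance
  | succ n ih =>
    intro M _ _ _ f hf
    set g : M →ₗ[R] R := (LinearMap.proj (Fin.last n)).comp f with hg
    have hJfg : (LinearMap.range g).FG := by
      rw [← Submodule.map_top]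
      exact Submodule.FG.map _ Module.Finite.fg_top
    have hJproj : Module.Projective R (LinearMap.range g) := hR _ hJfg
    set g' : M →ₗ[R] LinearMap.range g := g.rangeRestrict
    have hg's : Function.Surjective g' := g.surjective_rangeRestrict
    obtain ⟨h, hh⟩ := Module.projective_lifting_property g' LinearMap.id hg's
    set K := LinearMap.ker g'
    have hker : ∀ m : M, g' (m - h (g' m)) = 0 := by
      intro m
      have := LinearMap.congr_fun hh (g' m)
      simp only [LinearMap.comp_apply, LinearMap.id_apply] at this
      simp [map_sub, this]
    let e : M ≃ₗ[R] K × (LinearMap.range g) :=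
      { toFun := fun m => (⟨m - h (g' m), hker m⟩, g' m)
        map_add' := by
          intro x y
          ext <;> simp [add_sub_add_comm]
        map_smul' := by
          intro c x
          ext <;> simp [smul_sub]
        invFun := fun p => (p.1 : M) + h p.2
        left_inv := by
          intro m; simp
        right_inv := by
          rintro ⟨⟨x, hx⟩, j⟩
          have hx' : g' x = 0 := hx
          have hhj := LinearMap.congr_fun hh j
          simp only [LinearMap.comp_apply, LinearMap.id_apply] at hhj
          ext
          · simp [hx', hhj]
          · simp [hx', hhj] }
    have hKfin : Module.Finite R K := by
      have : Function.Surjective (fun m : M => (e m).1) := by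
        rintro ⟨x, hx⟩
        refine ⟨x, ?_⟩
        have hx' : g' x = 0 := hx
        simp [e, hx']
      exact Module.Finite.of_surjective
        (LinearMap.fst R K (LinearMap.range g) ∘ₗ e.toLinearMap) (by
          intro y; obtain ⟨m, hm⟩ := this y; exact ⟨m, hm⟩)
    let ι : K →ₗ[R] (Fin n → R) :=
      (LinearMap.pi fun i => (LinearMap.proj (Fin.castSucc i)).comp f).comp (K.subtype)
    have hι : Function.Injective ι := by
      intro x y hxy
      have hxy' : ∀ i : Fin n, f x (Fin.castSucc i) = f y (Fin.castSucc i) := by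
        intro i; exact congr_fun hxy i
      have hlast : f (x : M) (Fin.last n) = f (y : M) (Fin.last n) := by
        have hx : g (x : M) = 0 := congr_arg Subtype.val (show g' (x : M) = 0 from x.2)
        have hy : g (y : M) = 0 := congr_arg Subtype.val (show g' (y : M) = 0 from y.2)
        simp only [hg, LinearMap.comp_apply, LinearMap.proj_apply] at hx hy
        rw [hx, hy]
      have : f (x : M) = f (y : M) := by
        funext j
        refine Fin.lastCases ?_ ?_ j
        · exact hlast
        · exact fun i => hxy' i
      exact Subtype.ext (hf this)
    have hKproj : Module.Projective R K := ih K ι hι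
    exact Module.Projective.of_equiv e.symm

/-! ### Relative projectivity for separable extensions -/

section Averaging

variable (k : Type*) [Field k] (F : Type*) [Field F] [Algebra k F] [FiniteDimensional k F]

omit [FiniteDimensional k F] in
theorem aux_unram [Algebra.IsSeparable k F] : Algebra.FormallyUnramified k F := by
  letI B := (⊥ : IntermediateField k F)
  have h1 : Algebra.IsSeparable B F := Algebra.isSeparable_tower_top_of_isSeparable k B F
  have h2 : Algebra.FormallyUnramified B F := Algebra.FormallyUnramified.of_isSeparable B F
  have h3 : Algebra.FormallyUnramified k B :=
    Algebra.FormallyUnramified.of_equiv (R := k) (A := k) (IntermediateField.botEquiv k F).symm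
  exact Algebra.FormallyUnramified.comp k B F

variable (R : Type*) [Ring R] [Algebra k R]

omit [FiniteDimensional k F] in
theorem aux_rsmul (N : Type*) [AddCommGroup N] [Module (TensorProduct k R F) N]
    [Module R N] [IsScalarTower R (TensorProduct k R F) N] (r : R) (w : N) :
    r • w = ((r ⊗ₜ[k] (1 : F) : TensorProduct k R F)) • w := by
  have : (r ⊗ₜ[k] (1 : F) : TensorProduct k R F) = r • (1 : TensorProduct k R F) := by
    rw [Algebra.TensorProduct.one_def, TensorProduct.smul_tmul', smul_eq_mul, mul_one]
  rw [this, smul_assoc, one_smul]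

omit [FiniteDimensional k F] in
theorem aux_comm (N : Type*) [AddCommGroup N] [Module (TensorProduct k R F) N]
    [Module R N] [IsScalarTower R (TensorProduct k R F) N] (r : R) (f : F) (w : N) :
    ((1 : R) ⊗ₜ[k] f : TensorProduct k R F) • (r • w) =
      r • (((1 : R) ⊗ₜ[k] f : TensorProduct k R F) • w) := by
  rw [aux_rsmul k F R N r w, ← mul_smul,
    aux_rsmul k F R N r (((1 : R) ⊗ₜ[k] f : TensorProduct k R F) • w), ← mul_smul,
    Algebra.TensorProduct.tmul_mul_tmul, Algebra.TensorProduct.tmul_mul_tmul]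
  rw [one_mul, one_mul, mul_one, mul_one]

variable [Algebra.IsSeparable k F]

set_option maxHeartbeats 1000000 in
theorem aux_proj_up (M : Type*) [AddCommGroup M]
    [Module (TensorProduct k R F) M] [Module R M] [Module k M]
    [IsScalarTower R (TensorProduct k R F) M] [IsScalarTower k (TensorProduct k R F) M]
    [IsScalarTower k R M] [Module.Projective R M] :
    Module.Projective (TensorProduct k R F) M := by
  have := aux_unram k F
  set p : (M →₀ TensorProduct k R F) →ₗ[TensorProduct k R F] M :=
    Finsupp.linearCombination (TensorProduct k R F) id with hp
  have hpsurj : Function.Surjective p := fun m => ⟨Finsupp.single m 1, by simp [hp]⟩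
  obtain ⟨g, hg⟩ := Module.projective_lifting_property
    (LinearMap.restrictScalars R p) (LinearMap.id (R := R) (M := M)) hpsurj
  have hgp : ∀ m : M, p (g m) = m := fun m => LinearMap.congr_fun hg m
  have hgsmulR : ∀ (r : R) (w : M), g (r • w) = r • g w := fun r w => g.map_smul r w
  have hgsmulk : ∀ (c : k) (w : M), g (c • w) = c • g w := by
    intro c w
    have h1 : c • w = (algebraMap k R c) • w := by
      rw [Algebra.algebraMap_eq_smul_one, smul_assoc, one_smul]
    have h2 : c • g w = (algebraMap k R c) • g w := by
      rw [Algebra.algebraMap_eq_smul_one, smul_assoc, one_smul]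
    rw [h1, h2, hgsmulR]
  set B : M → F →ₗ[k] F →ₗ[k] (M →₀ TensorProduct k R F) := fun m =>
    LinearMap.mk₂ k
      (fun u v => ((1 : R) ⊗ₜ[k] u : TensorProduct k R F) •
        g ((((1 : R) ⊗ₜ[k] v : TensorProduct k R F)) • m))
      (by intro u u' v; rw [TensorProduct.tmul_add, add_smul])
      (by intro c u v; rw [TensorProduct.tmul_smul, smul_assoc])
      (by intro u v v'; rw [TensorProduct.tmul_add, add_smul, map_add, smul_add])
      (by intro c u v; rw [TensorProduct.tmul_smul, smul_assoc, hgsmulk, smul_comm])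
    with hB
  set Φ : M → F ⊗[k] F →ₗ[k] (M →₀ TensorProduct k R F) := fun m =>
    TensorProduct.lift (B m) with hΦ
  have hΦtmul : ∀ (m : M) (u v : F), Φ m (u ⊗ₜ v) =
      ((1 : R) ⊗ₜ[k] u : TensorProduct k R F) •
        g ((((1 : R) ⊗ₜ[k] v : TensorProduct k R F)) • m) := by
    intro m u v; simp [hΦ, hB]
  set e : F ⊗[k] F := Algebra.FormallyUnramified.elem k F with he
  set s : M → (M →₀ TensorProduct k R F) := fun m => Φ m e with hs
  have hsadd : ∀ m m', s (m + m') = s m + s m' := by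
    intro m m'
    have : Φ (m + m') = Φ m + Φ m' := by
      ext u v
      simp only [TensorProduct.AlgebraTensorModule.curry_apply, TensorProduct.curry_apply,
        LinearMap.coe_restrictScalars, LinearMap.add_apply, hΦtmul]
      rw [smul_add, map_add, smul_add]
    simp only [hs, this, LinearMap.add_apply]
  have hsmulR : ∀ (r : R) (m : M), s (r • m) = r • s m := by
    intro r m
    have key : ∀ t : F ⊗[k] F, Φ (r • m) t = r • Φ m t := by
      intro t
      induction t using TensorProduct.induction_on with
      | zero => simp
      | tmul u v =>
        rw [hΦtmul, hΦtmul, aux_comm k F R M r v m, hgsmulR,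
          aux_comm k F R (M →₀ TensorProduct k R F) r u]
      | add x y hx hy => rw [map_add, map_add, hx, hy, smul_add]
    exact key e
  have hsmulF : ∀ (f : F) (m : M),
      s (((1:R) ⊗ₜ[k] f : TensorProduct k R F) • m) =
        ((1:R) ⊗ₜ[k] f : TensorProduct k R F) • s m := by
    intro f m
    have key1 : ∀ t : F ⊗[k] F,
        Φ (((1:R) ⊗ₜ[k] f : TensorProduct k R F) • m) t = Φ m (t * ((1:F) ⊗ₜ[k] f)) := by
      intro t
      induction t using TensorProduct.induction_on with
      | zero => simp
      | tmul u v =>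
        rw [Algebra.TensorProduct.tmul_mul_tmul, mul_one, hΦtmul, hΦtmul, ← mul_smul,
          Algebra.TensorProduct.tmul_mul_tmul, one_mul]
      | add x y hx hy => rw [map_add, add_mul, map_add, hx, hy]
    have key2 : ∀ t : F ⊗[k] F,
        Φ m ((f ⊗ₜ[k] (1:F)) * t) = ((1:R) ⊗ₜ[k] f : TensorProduct k R F) • Φ m t := by
      intro t
      induction t using TensorProduct.induction_on with
      | zero => simp
      | tmul u v =>
        rw [Algebra.TensorProduct.tmul_mul_tmul, one_mul, hΦtmul, hΦtmul, ← mul_smul,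
          Algebra.TensorProduct.tmul_mul_tmul, one_mul]
      | add x y hx hy => rw [mul_add, map_add, map_add, hx, hy, smul_add]
    have helem : e * ((1:F) ⊗ₜ[k] f) = (f ⊗ₜ[k] (1:F)) * e := by
      have h0 := Algebra.FormallyUnramified.one_tmul_sub_tmul_one_mul_elem (R := k) f
      rw [sub_mul, sub_eq_zero] at h0
      rw [mul_comm]
      exact h0
    show Φ (((1:R) ⊗ₜ[k] f : TensorProduct k R F) • m) e = _
    rw [key1, helem, key2]
  have hszero : s 0 = 0 := by
    have h0 : (0 : M) = (0 : R) • (0 : M) := by rw [zero_smul]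
    rw [h0, hsmulR, zero_smul]
  set slin : M →ₗ[TensorProduct k R F] (M →₀ TensorProduct k R F) :=
    { toFun := s
      map_add' := hsadd
      map_smul' := by
        intro x m
        simp only [RingHom.id_apply]
        induction x using TensorProduct.induction_on with
        | zero => rw [zero_smul, zero_smul, hszero]
        | tmul r f =>
          have h1 : (r ⊗ₜ[k] f : TensorProduct k R F) • m =
              r • (((1:R) ⊗ₜ[k] f : TensorProduct k R F) • m) := by
            rw [aux_rsmul k F R M r, ← mul_smul, Algebra.TensorProduct.tmul_mul_tmul,
              one_mul, mul_one]
          have h2 : (r ⊗ₜ[k] f : TensorProduct k R F) • s m =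
              r • (((1:R) ⊗ₜ[k] f : TensorProduct k R F) • s m) := by
            rw [aux_rsmul k F R (M →₀ TensorProduct k R F) r, ← mul_smul,
              Algebra.TensorProduct.tmul_mul_tmul, one_mul, mul_one]
          rw [h1, hsmulR, hsmulF, h2]
        | add x y hx hy => rw [add_smul, hsadd, hx, hy, add_smul] } with hslin
  have hps : ∀ m : M, p (s m) = m := by
    intro m
    have key : ∀ t : F ⊗[k] F, p (Φ m t) =
        ((1:R) ⊗ₜ[k] (Algebra.TensorProduct.lmul' k t) : TensorProduct k R F) • m := by
      intro t
      induction t using TensorProduct.induction_on with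
      | zero => simp
      | tmul u v =>
        rw [hΦtmul, map_smul, hgp, ← mul_smul, Algebra.TensorProduct.tmul_mul_tmul, one_mul,
          Algebra.TensorProduct.lmul'_apply_tmul]
      | add x y hx hy =>
        rw [map_add, map_add, map_add, hx, hy, TensorProduct.tmul_add, add_smul]
    show p (Φ m e) = m
    rw [key, Algebra.FormallyUnramified.lmul_elem, ← Algebra.TensorProduct.one_def, one_smul]
  rw [Module.projective_def']
  exact ⟨slin, LinearMap.ext fun m => hps m⟩

/-! ### The main left-sided statement -/

set_option maxHeartbeats 1000000 in
theorem aux_main_left (hR : IsLeftSemihereditary R) :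
    IsLeftSemihereditary (TensorProduct k R F) := by
  intro I hI
  haveI : Module.Finite (TensorProduct k R F) ↥I := Module.Finite.iff_fg.mpr hI
  haveI : Module.Finite R ↥I := Module.Finite.trans (TensorProduct k R F) ↥I
  set n := Module.finrank k F with hn
  set b : Module.Basis (Fin n) k F := Module.finBasis k F with hb
  set bS : Module.Basis (Fin n) R (TensorProduct k R F) := b.baseChange R with hbS
  set f : ↥I →ₗ[R] (Fin n → R) :=
    bS.equivFun.toLinearMap ∘ₗ (I.subtype.restrictScalars R) with hf
  have hfinj : Function.Injective f := by
    intro x y hxy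
    exact Subtype.ext (bS.equivFun.injective hxy)
  haveI : Module.Projective R ↥I := aux_proj_of_embed hR n ↥I f hfinj
  exact aux_proj_up k F R ↥I

end Averaging

/-! ### Transfer lemmas -/

attribute [local instance] RingHomInvPair.of_ringEquiv in
theorem aux_left_of_ringEquiv {A B : Type*} [Ring A] [Ring B] (e : A ≃+* B)
    (hA : IsLeftSemihereditary A) : IsLeftSemihereditary B := by
  classical
  intro I hI
  set J : Ideal A := I.comap (e : A →+* B) with hJ
  have hJeq : J = I.map e.symm := (Ideal.map_symm e).symm
  have hJfg : J.FG := by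
    obtain ⟨t, ht⟩ := hI
    refine ⟨t.image e.symm, ?_⟩
    rw [Finset.coe_image, hJeq, ← ht, Ideal.map_span]
  have hJproj : Module.Projective A ↥J := hA J hJfg
  have eJ : ↥J ≃ₛₗ[RingHomClass.toRingHom e] ↥I :=
    { toFun := fun x => ⟨e x.1, x.2⟩
      map_add' := fun x y => Subtype.ext (map_add e x.1 y.1)
      map_smul' := fun a x => Subtype.ext (map_mul e a x.1)
      invFun := fun y => ⟨e.symm y.1, show e (e.symm y.1) ∈ I by
        rw [e.apply_symm_apply]; exact y.2⟩
      left_inv := fun x => Subtype.ext (e.symm_apply_apply x.1)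
      right_inv := fun y => Subtype.ext (e.apply_symm_apply y.1) }
  exact Module.Projective.of_equiv eJ

theorem aux_right_of_left_op {A : Type*} [Ring A]
    (h : IsLeftSemihereditary Aᵐᵒᵖ) : IsRightSemihereditary A := by
  intro I hI
  let J : Ideal Aᵐᵒᵖ :=
    { carrier := MulOpposite.unop ⁻¹' I
      add_mem' := fun ha hb => I.add_mem ha hb
      zero_mem' := I.zero_mem
      smul_mem' := fun a x hx => by
        show MulOpposite.unop (a * x) ∈ I
        rw [MulOpposite.unop_mul]
        have := I.smul_mem a hx
        rwa [MulOpposite.smul_eq_mul_unop] at this }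
  have eJI : ↥J ≃ₗ[Aᵐᵒᵖ] ↥I :=
    { toFun := fun x => ⟨x.1.unop, x.2⟩
      map_add' := fun x y => Subtype.ext rfl
      map_smul' := fun a x => Subtype.ext (by
        show MulOpposite.unop (a * x.1) = a • x.1.unop
        rw [MulOpposite.unop_mul, MulOpposite.smul_eq_mul_unop])
      invFun := fun y => ⟨MulOpposite.op y.1, y.2⟩
      left_inv := fun x => Subtype.ext rfl
      right_inv := fun y => Subtype.ext rfl }
  have hJfg : J.FG := by
    have : Module.Finite Aᵐᵒᵖ ↥I := Module.Finite.iff_fg.mpr hI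
    exact Module.Finite.iff_fg.mp (Module.Finite.equiv eJI.symm)
  have := h J hJfg
  exact Module.Projective.of_equiv eJI

theorem aux_left_op_of_right {A : Type*} [Ring A]
    (h : IsRightSemihereditary A) : IsLeftSemihereditary Aᵐᵒᵖ := by
  intro I hI
  let J : Submodule Aᵐᵒᵖ A :=
    { carrier := MulOpposite.op ⁻¹' I
      add_mem' := fun ha hb => I.add_mem ha hb
      zero_mem' := I.zero_mem
      smul_mem' := fun a x hx => by
        show MulOpposite.op (a • x) ∈ I
        rw [MulOpposite.smul_eq_mul_unop, MulOpposite.op_mul, MulOpposite.op_unop]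
        exact I.mul_mem_left a hx }
  have eJI : ↥J ≃ₗ[Aᵐᵒᵖ] ↥I :=
    { toFun := fun x => ⟨MulOpposite.op x.1, x.2⟩
      map_add' := fun x y => Subtype.ext rfl
      map_smul' := fun a x => Subtype.ext (by
        show MulOpposite.op (a • x.1) = a * MulOpposite.op x.1
        rw [MulOpposite.smul_eq_mul_unop, MulOpposite.op_mul, MulOpposite.op_unop])
      invFun := fun y => ⟨MulOpposite.unop y.1, by
        show MulOpposite.op (MulOpposite.unop y.1) ∈ I
        rw [MulOpposite.op_unop]; exact y.2⟩
      left_inv := fun x => Subtype.ext rfl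
      right_inv := fun y => Subtype.ext rfl }
  have hJfg : J.FG := by
    have : Module.Finite Aᵐᵒᵖ ↥I := Module.Finite.iff_fg.mpr hI
    exact Module.Finite.iff_fg.mp (Module.Finite.equiv eJI.symm)
  have := h J hJfg
  exact Module.Projective.of_equiv eJI

/-- If `R` is a semihereditary algebra over a field `k` and `F/k` is a finite
separable field extension, then `R ⊗_k F` is semihereditary. -/
theorem stmt5 (k : Type*) [Field k] (R : Type*) [Ring R] [Algebra k R]
    (F : Type*) [Field F] [Algebra k F] [FiniteDimensional k F]
    [Algebra.IsSeparable k F]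
    (hR : IsSemihereditary R) :
    IsSemihereditary (TensorProduct k R F) := by
  constructor
  · exact aux_main_left k F R hR.1
  · apply aux_right_of_left_op
    have h1 : IsLeftSemihereditary Rᵐᵒᵖ := aux_left_op_of_right hR.2
    have h2 : IsLeftSemihereditary (TensorProduct k Rᵐᵒᵖ F) := aux_main_left k F Rᵐᵒᵖ h1
    have e1 : TensorProduct k Rᵐᵒᵖ F ≃ₐ[k] TensorProduct k Rᵐᵒᵖ Fᵐᵒᵖ :=
      Algebra.TensorProduct.congr AlgEquiv.refl (AlgEquiv.toOpposite k F)
    have e2 : TensorProduct k Rᵐᵒᵖ Fᵐᵒᵖ ≃ₐ[k] (TensorProduct k R F)ᵐᵒᵖ :=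
      Algebra.TensorProduct.opAlgEquiv k k R F
    exact aux_left_of_ringEquiv (e1.trans e2).toRingEquiv h2
end

section
/- Let R be a k-algebra and F/k a finite separable field extension, and set S = R ⊗_k F. Then every short exact sequence of S-modules which splits as a sequence of R-modules also splits as a sequence of S-modules. -/
universe u

open TensorProduct

section Aux

variable {k F : Type*} [Field k] [Field F] [Algebra k F]
    [FiniteDimensional k F] [Algebra.IsSeparable k F]
    {ι : Type*} [Fintype ι] [DecidableEq ι]

private lemma aux_repr_b (b : Module.Basis ι k F) (y : F) (i : ι) :
    b.repr y i = Algebra.traceForm k F y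
      ((Algebra.traceForm k F).dualBasis (traceForm_nondegenerate k F) b i) := by
  have hbb : (Algebra.traceForm k F).dualBasis (traceForm_nondegenerate k F)
      ((Algebra.traceForm k F).dualBasis (traceForm_nondegenerate k F) b) = b :=
    LinearMap.BilinForm.dualBasis_dualBasis _ (Algebra.traceForm_isSymm k) b
  conv_lhs => rw [← hbb]
  rw [LinearMap.BilinForm.dualBasis_repr_apply]

private lemma aux_trace (b : Module.Basis ι k F) (y : F) :
    Algebra.trace k F y = ∑ i, Algebra.trace k F
      (y * b i * ((Algebra.traceForm k F).dualBasis (traceForm_nondegenerate k F) b i)) := by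
  rw [Algebra.trace_eq_matrix_trace b y, Matrix.trace]
  refine Finset.sum_congr rfl fun i _ => ?_
  rw [Matrix.diag_apply, Algebra.leftMulMatrix_eq_repr_mul, aux_repr_b b]
  rfl

/-- The Casimir element of the trace form has `μ(e) = 1`. -/
private lemma aux_sum_one (b : Module.Basis ι k F) :
    ∑ i, b i * ((Algebra.traceForm k F).dualBasis (traceForm_nondegenerate k F) b i)
      = 1 := by
  set c := (Algebra.traceForm k F).dualBasis (traceForm_nondegenerate k F) b with hcdef
  have key : ∀ y : F, Algebra.traceForm k F (∑ i, b i * c i - 1) y = 0 := by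
    intro y
    rw [map_sub, LinearMap.sub_apply, sub_eq_zero, map_sum, LinearMap.sum_apply]
    have h1 : Algebra.traceForm k F 1 y = Algebra.trace k F y := by
      rw [Algebra.traceForm_apply, one_mul]
    rw [h1, aux_trace b y]
    refine Finset.sum_congr rfl fun i _ => ?_
    rw [Algebra.traceForm_apply]
    exact congrArg _ (by ring)
  exact sub_eq_zero.mp ((traceForm_nondegenerate k F).1 _ key)

private lemma aux_expand (b : Module.Basis ι k F) (x : F) (j : ι) :
    ∑ i, (((Algebra.traceForm k F).dualBasis (traceForm_nondegenerate k F) b).repr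
        (((Algebra.traceForm k F).dualBasis (traceForm_nondegenerate k F) b i) * x) j)
        • b i = x * b j := by
  set c := (Algebra.traceForm k F).dualBasis (traceForm_nondegenerate k F) b with hcdef
  conv_rhs => rw [← Module.Basis.sum_repr b (x * b j)]
  refine Finset.sum_congr rfl fun i _ => ?_
  congr 1
  rw [aux_repr_b b, hcdef, LinearMap.BilinForm.dualBasis_repr_apply, Algebra.traceForm_apply,
    Algebra.traceForm_apply]
  exact congrArg _ (by ring)

end Aux

/-- Let `S = R ⊗_k F` with `F/k` a finite separable field extension. Every
surjection of `S`-modules which splits `R`-linearly (restricting scalars along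
`R → S`, `r ↦ r ⊗ 1`) also splits `S`-linearly; equivalently, every short
exact sequence of `S`-modules which splits as a sequence of `R`-modules splits
as a sequence of `S`-modules. -/
theorem stmt6 (k : Type*) [Field k] (R : Type*) [Ring R] [Algebra k R]
    (F : Type*) [Field F] [Algebra k F] [FiniteDimensional k F]
    [Algebra.IsSeparable k F]
    (M N : Type u) [AddCommGroup M] [AddCommGroup N]
    [Module (TensorProduct k R F) M] [Module (TensorProduct k R F) N]
    (f : M →ₗ[TensorProduct k R F] N) (hf : Function.Surjective f)
    (hsplitR :
      letI : Module R M :=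
        Module.compHom M (Algebra.TensorProduct.includeLeftRingHom : R →+* TensorProduct k R F)
      letI : Module R N :=
        Module.compHom N (Algebra.TensorProduct.includeLeftRingHom : R →+* TensorProduct k R F)
      ∃ g : N →ₗ[R] M, ∀ n, f (g n) = n) :
    ∃ g : N →ₗ[TensorProduct k R F] M, ∀ n, f (g n) = n := by
  classical
  letI : Module R M :=
    Module.compHom M (Algebra.TensorProduct.includeLeftRingHom : R →+* TensorProduct k R F)
  letI : Module R N :=
    Module.compHom N (Algebra.TensorProduct.includeLeftRingHom : R →+* TensorProduct k R F)
  obtain ⟨g, hg⟩ := hsplitR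
  set S := TensorProduct k R F with hSdef
  -- helper identities for the S-actions
  have hcomm : ∀ (P : Type u) [AddCommGroup P] [Module S P] (r : R) (y : F) (m : P),
      ((1 : R) ⊗ₜ[k] y : S) • (r ⊗ₜ[k] (1 : F) : S) • m
        = (r ⊗ₜ[k] (1 : F) : S) • ((1 : R) ⊗ₜ[k] y : S) • m := by
    intro P _ _ r y m
    rw [← mul_smul, ← mul_smul]
    congr 1
    rw [Algebra.TensorProduct.tmul_mul_tmul, Algebra.TensorProduct.tmul_mul_tmul,
      one_mul, mul_one, one_mul, mul_one]
  have hmul : ∀ (P : Type u) [AddCommGroup P] [Module S P] (y z : F) (m : P),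
      ((1 : R) ⊗ₜ[k] y : S) • ((1 : R) ⊗ₜ[k] z : S) • m
        = ((1 : R) ⊗ₜ[k] (y * z) : S) • m := by
    intro P _ _ y z m
    rw [← mul_smul, Algebra.TensorProduct.tmul_mul_tmul, one_mul]
  have tsm : ∀ (γ : k) (y : F), ((algebraMap k R γ) ⊗ₜ[k] y : S) = γ • ((1 : R) ⊗ₜ[k] y) := by
    intro γ y
    rw [Algebra.algebraMap_eq_smul_one, TensorProduct.smul_tmul']
  -- R-linearity of g in explicit form
  have hgR : ∀ (r : R) (w : N), g ((r ⊗ₜ[k] (1 : F) : S) • w) = (r ⊗ₜ[k] (1 : F) : S) • g w := by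
    intro r w
    exact g.map_smul r w
  -- trace form dual basis
  set b := Module.finBasis k F with hbdef
  set c := (Algebra.traceForm k F).dualBasis (traceForm_nondegenerate k F) b with hcdef
  -- the candidate splitting
  set h0 : N → M := fun n => ∑ i, ((1 : R) ⊗ₜ[k] b i : S) • g (((1 : R) ⊗ₜ[k] c i : S) • n)
    with hh0
  have h0add : ∀ m n : N, h0 (m + n) = h0 m + h0 n := by
    intro m n
    simp only [hh0, smul_add, map_add, ← Finset.sum_add_distrib]
  have h00 : h0 0 = 0 := by
    simp only [hh0, smul_zero, map_zero, Finset.sum_const_zero]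
  -- action of r ⊗ 1
  have hR : ∀ (r : R) (n : N),
      h0 ((r ⊗ₜ[k] (1 : F) : S) • n) = (r ⊗ₜ[k] (1 : F) : S) • h0 n := by
    intro r n
    rw [hh0, Finset.smul_sum]
    refine Finset.sum_congr rfl fun i _ => ?_
    rw [hcomm N, hgR, hcomm M]
  have hsplitmul : ∀ (r : R) (y : F), (r ⊗ₜ[k] y : S) = (r ⊗ₜ[k] (1 : F)) * ((1 : R) ⊗ₜ[k] y) := by
    intro r y
    rw [Algebra.TensorProduct.tmul_mul_tmul, mul_one, one_mul]
  -- key identity: action of 1 ⊗ x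
  have hF : ∀ (x : F) (n : N),
      h0 (((1 : R) ⊗ₜ[k] x : S) • n) = ((1 : R) ⊗ₜ[k] x : S) • h0 n := by
    intro x n
    have step1 : h0 (((1 : R) ⊗ₜ[k] x : S) • n)
        = ∑ i, ((1 : R) ⊗ₜ[k] b i : S) • g (((1 : R) ⊗ₜ[k] (c i * x) : S) • n) := by
      rw [hh0]
      refine Finset.sum_congr rfl fun i _ => ?_
      rw [hmul N]
    rw [step1]
    have step2 : ∀ i, g (((1 : R) ⊗ₜ[k] (c i * x) : S) • n)
        = ∑ j, ((algebraMap k R (c.repr (c i * x) j)) ⊗ₜ[k] (1 : F) : S) •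
            g (((1 : R) ⊗ₜ[k] c j : S) • n) := by
      intro i
      have e1 : ((1 : R) ⊗ₜ[k] (c i * x) : S)
          = ∑ j, (algebraMap k R (c.repr (c i * x) j)) ⊗ₜ[k] c j := by
        conv_lhs => rw [← Module.Basis.sum_repr c (c i * x)]
        rw [tmul_sum]
        refine Finset.sum_congr rfl fun j _ => ?_
        rw [tmul_smul, ← tsm]
      rw [e1, Finset.sum_smul, map_sum]
      refine Finset.sum_congr rfl fun j _ => ?_
      rw [hsplitmul, mul_smul, hgR]
    calc ∑ i, ((1 : R) ⊗ₜ[k] b i : S) • g (((1 : R) ⊗ₜ[k] (c i * x) : S) • n)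
        = ∑ j, ∑ i, ((algebraMap k R (c.repr (c i * x) j)) ⊗ₜ[k] b i : S) •
            g (((1 : R) ⊗ₜ[k] c j : S) • n) := by
          rw [Finset.sum_comm]
          refine Finset.sum_congr rfl fun i _ => ?_
          rw [step2 i, Finset.smul_sum]
          refine Finset.sum_congr rfl fun j _ => ?_
          rw [hcomm M, ← mul_smul, ← hsplitmul]
      _ = ∑ j, ((1 : R) ⊗ₜ[k] (x * b j) : S) • g (((1 : R) ⊗ₜ[k] c j : S) • n) := by
          refine Finset.sum_congr rfl fun j _ => ?_
          rw [← Finset.sum_smul]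
          congr 1
          calc ∑ i, (algebraMap k R (c.repr (c i * x) j)) ⊗ₜ[k] b i
              = (1 : R) ⊗ₜ[k] (∑ i, (c.repr (c i * x) j) • b i) := by
                rw [tmul_sum]
                exact Finset.sum_congr rfl fun i _ => by rw [tmul_smul, ← tsm]
            _ = (1 : R) ⊗ₜ[k] (x * b j) := by rw [hcdef, hbdef, aux_expand]
      _ = ((1 : R) ⊗ₜ[k] x : S) • h0 n := by
          rw [hh0, Finset.smul_sum]
          exact Finset.sum_congr rfl fun j _ => by rw [hmul M]
  refine ⟨{ toFun := h0
            map_add' := h0add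
            map_smul' := ?_ }, ?_⟩
  · intro s n
    simp only [RingHom.id_apply]
    induction s using TensorProduct.induction_on with
    | zero => rw [zero_smul, zero_smul, h00]
    | tmul r x =>
        rw [hsplitmul, mul_smul, hR, hF, ← mul_smul]
    | add s t hs ht =>
        rw [add_smul, add_smul, h0add, hs, ht]
  · intro n
    show f (h0 n) = n
    have e : f (h0 n) = (((1 : R) ⊗ₜ[k] (∑ i, b i * c i)) : S) • n := by
      rw [hh0, map_sum, tmul_sum, Finset.sum_smul]
      refine Finset.sum_congr rfl fun i _ => ?_
      rw [map_smul, hg, hmul N]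
    rw [e, hcdef, hbdef, aux_sum_one, ← Algebra.TensorProduct.one_def, one_smul]
end

section
/- Let R be a ring and N ⊆ J ideals with Jʳ ⊆ N for some r ≥ 1. If N has the right Artin–Rees property, then so does J. -/
open Pointwise

/-- An ideal `I` of `R` has the right Artin–Rees property if for every right
ideal `K` and every `n` there exists `m` with `K ∩ Iᵐ ⊆ K·Iⁿ`. -/
def HasRightArtinRees {R : Type*} [Ring R] (I : Ideal R) : Prop :=
  ∀ K : Submodule Rᵐᵒᵖ R, ∀ n : ℕ, ∃ m : ℕ,
    (K : Set R) ∩ ((I ^ m : Ideal R) : Set R) ⊆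
      (AddSubgroup.closure ((K : Set R) * ((I ^ n : Ideal R) : Set R)) : Set R)

lemma pow_add_aux {R : Type*} [Ring R] (I : Ideal R) (a b : ℕ) :
    I ^ (a + (b + 1)) = I ^ a * I ^ (b + 1) := by
  induction b with
  | zero => rw [Submodule.pow_one, ← Submodule.pow_succ]
  | succ k ih =>
    rw [show a + (k + 1 + 1) = (a + (k + 1)) + 1 by omega, Submodule.pow_succ, ih,
      Submodule.pow_succ (n := k + 1), mul_assoc]

lemma mul_pow_le_aux {R : Type*} [Ring R] {J N : Ideal R} (s : ℕ)
    (hJN : J ^ (s + 1) ≤ N) : ∀ m : ℕ, J ^ ((s + 1) * m) ≤ N ^ m := by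
  intro m
  induction m with
  | zero => simp only [Nat.mul_zero]; exact le_rfl
  | succ k ih =>
    rw [Nat.mul_succ, pow_add_aux, Submodule.pow_succ]
    exact mul_le_mul' ih hJN

lemma pow_le_pow_aux {R : Type*} [Ring R] {I J : Ideal R} (h : I ≤ J) (n : ℕ) :
    I ^ n ≤ J ^ n := by
  induction n with
  | zero => exact le_rfl
  | succ k ih =>
    rw [Submodule.pow_succ, Submodule.pow_succ]
    exact mul_le_mul' ih h

/-- If `N ⊆ J` are (two-sided) ideals of `R` with `Jʳ ⊆ N` for some `r ≥ 1` and
`N` has the right Artin–Rees property, then so does `J`. -/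
theorem stmt9 (R : Type*) [Ring R] (N J : Ideal R)
    (hN2 : ∀ a ∈ N, ∀ r : R, a * r ∈ N)
    (hJ2 : ∀ a ∈ J, ∀ r : R, a * r ∈ J)
    (hNJ : N ≤ J) (r : ℕ) (hr : 1 ≤ r) (hJN : J ^ r ≤ N)
    (hAR : HasRightArtinRees N) :
    HasRightArtinRees J := by
  intro K n
  obtain ⟨m, hm⟩ := hAR K n
  refine ⟨r * m, ?_⟩
  obtain ⟨s, rfl⟩ : ∃ s, r = s + 1 := ⟨r - 1, by omega⟩
  have h1 : (J ^ ((s + 1) * m) : Ideal R) ≤ N ^ m := mul_pow_le_aux s hJN m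
  have h2 : (N ^ n : Ideal R) ≤ J ^ n := pow_le_pow_aux hNJ n
  intro x hx
  refine AddSubgroup.closure_mono (Set.mul_subset_mul_left h2) (hm ⟨hx.1, h1 hx.2⟩)
end

section
/- Let Z be a commutative Noetherian domain of Krull dimension one over an algebraically closed field k with dim_k Z < card k, and suppose x ∈ Z is transcendental over k. Then the set {λ ∈ k : (x - λ)Z ≠ Z} has cardinality equal to card k. -/
/-!
If `x - λ` is a unit of `Z`, its inverse is the image of `(x - λ)⁻¹` from the fraction field, and
for transcendental `x` the family of all `(x - λ)⁻¹` is linearly independent over `k`. So the set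
of such `λ` has cardinality at most `dim_k Z < card k`. Since `x` is not integral, `dim_k Z` is
infinite, hence so is `k`, and the complement of a set of smaller cardinality has cardinality
`card k`.
-/

universe u v

open Cardinal

namespace Transcendental

variable {k : Type u} {A : Type v} [Field k] [CommRing A] [Algebra k A] {x : A}

theorem aleph0_le_rank (hx : Transcendental k x) : ℵ₀ ≤ Module.rank k A := by
  by_contra! h
  have : Module.Finite k A := Module.rank_lt_aleph0_iff.mp h
  exact hx (Algebra.IsIntegral.isIntegral x).isAlgebraic

theorem linearIndependent_ringInverse_sub [IsDomain A] (hx : Transcendental k x) :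
    LinearIndependent k fun a : {a : k // IsUnit (x - algebraMap k A a)} ↦
      Ring.inverse (x - algebraMap k A a) := by
  let K := FractionRing A
  have hxK : Transcendental k (algebraMap A K x) :=
    (transcendental_algebraMap_iff (IsFractionRing.injective A K)).mpr hx
  refine LinearIndependent.of_comp (IsScalarTower.toAlgHom k A K).toLinearMap ?_
  convert hxK.linearIndependent_sub_inv.comp Subtype.val Subtype.val_injective using 1
  funext a
  change algebraMap A K (Ring.inverse _) = (algebraMap A K x - algebraMap k K a)⁻¹
  rw [IsScalarTower.algebraMap_apply k A K, ← map_sub]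
  exact eq_inv_of_mul_eq_one_left (by rw [← map_mul, Ring.inverse_mul_cancel _ a.2, map_one])

end Transcendental

theorem stmt16_general (k : Type u) (Z : Type v) [Field k]
    [CommRing Z] [IsDomain Z] [Algebra k Z]
    (hcard : Cardinal.lift.{u} (Module.rank k Z) < Cardinal.lift.{v} (Cardinal.mk k))
    (x : Z) (hx : Transcendental k x) :
    Cardinal.mk {lam : k // Ideal.span {x - algebraMap k Z lam} ≠ ⊤} = Cardinal.mk k := by
  have : Infinite k := by
    rw [Cardinal.infinite_iff, ← lift_le.{v}, lift_aleph0]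
    calc ℵ₀ ≤ lift.{u} (Module.rank k Z) := by simpa using hx.aleph0_le_rank
      _ ≤ _ := hcard.le
  have hunits : #{a : k | IsUnit (x - algebraMap k Z a)} < #k :=
    lift_lt.mp (hx.linearIndependent_ringInverse_sub.cardinal_lift_le_rank.trans_lt hcard)
  rw [← mk_compl_of_infinite _ hunits]
  exact mk_congr (Equiv.subtypeEquivRight fun a ↦ by simp [Ideal.span_singleton_eq_top])

/-- Let `Z` be a commutative Noetherian domain of Krull dimension one over an
algebraically closed field `k` with `dim_k Z < card k`, and let `x ∈ Z` be
transcendental over `k`.  Then the set `{λ ∈ k : (x - λ)Z ≠ Z}` has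
cardinality `card k`. -/
theorem stmt16 (k : Type u) (Z : Type v) [Field k] [IsAlgClosed k]
    [CommRing Z] [IsDomain Z] [IsNoetherianRing Z] [Algebra k Z]
    (hdim : ringKrullDim Z = 1)
    (hcard : Cardinal.lift.{u} (Module.rank k Z) < Cardinal.lift.{v} (Cardinal.mk k))
    (x : Z) (hx : Transcendental k x) :
    Cardinal.mk {lam : k // Ideal.span {x - algebraMap k Z lam} ≠ ⊤} = Cardinal.mk k :=
  stmt16_general k Z hcard x hx
end
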